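/- The holonomy group of Tetra is cyclic of order 4: the image of Γ_T under the linear-part homomorphism Lin : Isom(ℝ³) → O(3) is exactly {I, R, R², R³}, where R is the quarter-turn (x,y,z) ↦ (−y, x, z); in particular this image is a cyclic group of order 4. -/

import Mathlib

noncomputable section

/-- Points of `ℝ³`, written as `(x, y, z)`. -/
abbrev R3 : Type := ℝ × ℝ × ℝ

/-- The translation `T_w : x ↦ x + w` of `ℝ³`, as a bijection (it is an isometry). -/
def transl (w : R3) : Equiv.Perm R3 := Equiv.addRight w

/-- The quarter-turn screw motion `τ(x,y,z) = (−y, x, z+1/2)`, as a bijection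
(it is an isometry). -/
def tauE : Equiv.Perm R3 where
  toFun p := (-p.2.1, p.1, p.2.2 + 1/2)
  invFun p := (p.2.1, -p.1, p.2.2 - 1/2)
  left_inv p := by obtain ⟨x, y, z⟩ := p; simp
  right_inv p := by obtain ⟨x, y, z⟩ := p; simp

/-- The half-turn screw motion `ρ_x(x,y,z) = (x+1/2, −y, −z)`, as a bijection
(it is an isometry). -/
def rhoxE : Equiv.Perm R3 where
  toFun p := (p.1 + 1/2, -p.2.1, -p.2.2)
  invFun p := (p.1 - 1/2, -p.2.1, -p.2.2)
  left_inv p := by obtain ⟨x, y, z⟩ := p; simp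
  right_inv p := by obtain ⟨x, y, z⟩ := p; simp

/-- The half-turn screw motion `ρ_y(x,y,z) = (−x, y+1/2, 1−z)`, as a bijection
(it is an isometry). -/
def rhoyE : Equiv.Perm R3 where
  toFun p := (-p.1, p.2.1 + 1/2, 1 - p.2.2)
  invFun p := (-p.1, p.2.1 - 1/2, 1 - p.2.2)
  left_inv p := by obtain ⟨x, y, z⟩ := p; simp
  right_inv p := by obtain ⟨x, y, z⟩ := p; simp

/-- `Γ_T`, the covering group of the tetracosm Tetra: the group generated by the
translations `T_{(1,0,0)}, T_{(0,1,0)}, T_{(0,0,2)}` and `τ`. -/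
def GammaT : Subgroup (Equiv.Perm R3) :=
  Subgroup.closure {transl (1, 0, 0), transl (0, 1, 0), transl (0, 0, 2), tauE}

/-- `Γ_D`, the covering group of the didicosm Didi: the group generated by the
translations `T_{(1,0,0)}, T_{(0,1,0)}, T_{(0,0,2)}` and `ρ_x`, `ρ_y`. -/
def GammaD : Subgroup (Equiv.Perm R3) :=
  Subgroup.closure {transl (1, 0, 0), transl (0, 1, 0), transl (0, 0, 2), rhoxE, rhoyE}

end
/-- The quarter-turn `R(x,y,z) = (−y, x, z)` about the z-axis, as a linear map
(it is orthogonal). -/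
def quarterTurn : R3 →ₗ[ℝ] R3 where
  toFun p := (-p.2.1, p.1, p.2.2)
  map_add' p q := by simp [Prod.ext_iff]; ring
  map_smul' c p := by simp [Prod.ext_iff]

/-! Every generator of `Γ_T` is affine with linear part a power of the quarter turn `R`, and
affine bijections compose and invert along their linear parts; since `R⁴ = 1`, every element of
`Γ_T` has linear part some `Rᵏ`, which is `I, R, R²` or `R³`. Conversely `τᵏ` has linear part
`Rᵏ`, and `R² ≠ 1` makes the order of `R` exactly 4. -/

section LinearPart

variable {R V : Type*} [Semiring R] [AddCommGroup V] [Module R V]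

def HasLinearPart (γ : Equiv.Perm V) (A : Module.End R V) : Prop :=
  ∃ b : V, ∀ x, γ x = A x + b

namespace HasLinearPart

variable {γ δ : Equiv.Perm V} {A B : Module.End R V}

theorem unique (hA : HasLinearPart γ A) (hB : HasLinearPart γ B) : A = B := by
  obtain ⟨a, ha⟩ := hA
  obtain ⟨b, hb⟩ := hB
  have hab : a = b := by simpa using (ha 0).symm.trans (hb 0)
  ext x
  have hx := (ha x).symm.trans (hb x)
  rw [hab] at hx
  exact add_right_cancel hx

theorem one : HasLinearPart (1 : Equiv.Perm V) (1 : Module.End R V) :=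
  ⟨0, fun _ => by simp⟩

theorem mul (hA : HasLinearPart γ A) (hB : HasLinearPart δ B) :
    HasLinearPart (γ * δ) (A * B) := by
  obtain ⟨a, ha⟩ := hA
  obtain ⟨b, hb⟩ := hB
  exact ⟨A b + a, fun x => by
    rw [Equiv.Perm.mul_apply, hb, ha, map_add, Module.End.mul_apply, add_assoc]⟩

theorem pow (hA : HasLinearPart γ A) (k : ℕ) : HasLinearPart (γ ^ k) (A ^ k) := by
  induction k with
  | zero => exact one
  | succ k ih => rw [pow_succ, pow_succ]; exact ih.mul hA

theorem inv (hA : HasLinearPart γ A) (hAB : A * B = 1) : HasLinearPart γ⁻¹ B := by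
  obtain ⟨a, ha⟩ := hA
  refine ⟨-B a, fun x => ?_⟩
  rw [Equiv.Perm.inv_eq_iff_eq, ha, map_add, map_neg, ← Module.End.mul_apply,
    ← Module.End.mul_apply, hAB]
  simp

end HasLinearPart

theorem hasLinearPart_addRight (w : V) :
    HasLinearPart (Equiv.addRight w) (1 : Module.End R V) :=
  ⟨w, fun _ => rfl⟩

theorem exists_hasLinearPart_pow_of_mem_closure {A : Module.End R V} (hA : IsOfFinOrder A)
    {S : Set (Equiv.Perm V)} (hS : ∀ γ ∈ S, ∃ k : ℕ, HasLinearPart γ (A ^ k))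
    {γ : Equiv.Perm V} (hγ : γ ∈ Subgroup.closure S) : ∃ k : ℕ, HasLinearPart γ (A ^ k) := by
  obtain ⟨n, hn, hAn⟩ := hA.exists_pow_eq_one
  induction hγ using Subgroup.closure_induction with
  | mem γ hγ => exact hS γ hγ
  | one => exact ⟨0, by simpa using HasLinearPart.one⟩
  | mul γ δ _ _ hγ hδ =>
    obtain ⟨k, hk⟩ := hγ
    obtain ⟨l, hl⟩ := hδ
    exact ⟨k + l, pow_add A k l ▸ hk.mul hl⟩
  | inv γ _ hγ =>
    obtain ⟨k, hk⟩ := hγ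
    refine ⟨(n - 1) * k, hk.inv ?_⟩
    rw [← pow_add, ← one_add_mul, show 1 + (n - 1) = n by omega, pow_mul, hAn, one_pow]

end LinearPart

theorem quarterTurn_apply (p : R3) : quarterTurn p = (-p.2.1, p.1, p.2.2) := rfl

theorem quarterTurn_pow_four : (quarterTurn : Module.End ℝ R3) ^ 4 = 1 := by
  ext <;> simp [pow_succ, quarterTurn_apply]

theorem orderOf_quarterTurn : orderOf (quarterTurn : Module.End ℝ R3) = 4 := by
  have hsq : (quarterTurn : Module.End ℝ R3) ^ 2 ^ 1 ≠ 1 := by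
    intro h
    have := LinearMap.ext_iff.mp h (1, 0, 0)
    norm_num [pow_succ, quarterTurn_apply] at this
  have := orderOf_eq_prime_pow (p := 2) (n := 1) hsq (by simpa using quarterTurn_pow_four)
  simpa using this

theorem mem_quarterTurn_powers_iff {A : R3 →ₗ[ℝ] R3} :
    A ∈ ({LinearMap.id, quarterTurn, quarterTurn ∘ₗ quarterTurn,
        quarterTurn ∘ₗ quarterTurn ∘ₗ quarterTurn} : Set (R3 →ₗ[ℝ] R3)) ↔
      ∃ k : ℕ, A = (quarterTurn : Module.End ℝ R3) ^ k := by
  have hset : ({LinearMap.id, quarterTurn, quarterTurn ∘ₗ quarterTurn,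
      quarterTurn ∘ₗ quarterTurn ∘ₗ quarterTurn} : Set (R3 →ₗ[ℝ] R3)) =
      {quarterTurn ^ 0, quarterTurn ^ 1, quarterTurn ^ 2, quarterTurn ^ 3} := by
    simp only [pow_succ, pow_zero, one_mul, Module.End.mul_eq_comp]
    rfl
  rw [hset]
  constructor
  · rintro (h | h | h | h) <;> exact ⟨_, h⟩
  · rintro ⟨k, rfl⟩
    have hmod := pow_mod_orderOf (quarterTurn : Module.End ℝ R3) k
    rw [orderOf_quarterTurn] at hmod
    rw [← hmod]
    have hk : k % 4 < 4 := Nat.mod_lt _ (by norm_num)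
    interval_cases k % 4 <;> simp

theorem hasLinearPart_tauE : HasLinearPart tauE (quarterTurn : Module.End ℝ R3) :=
  ⟨(0, 0, 1/2), fun _ => by simp [tauE, quarterTurn_apply]⟩

theorem tauE_mem_gammaT : tauE ∈ GammaT :=
  Subgroup.subset_closure (by simp)

theorem exists_hasLinearPart_quarterTurn_pow {γ : Equiv.Perm R3} (hγ : γ ∈ GammaT) :
    ∃ k : ℕ, HasLinearPart γ ((quarterTurn : Module.End ℝ R3) ^ k) := by
  refine exists_hasLinearPart_pow_of_mem_closure
    (isOfFinOrder_iff_pow_eq_one.2 ⟨4, by norm_num, quarterTurn_pow_four⟩) ?_ hγ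
  rintro γ (rfl | rfl | rfl | rfl)
  iterate 3 exact ⟨0, by rw [pow_zero]; exact hasLinearPart_addRight _⟩
  exact ⟨1, by simpa using hasLinearPart_tauE⟩

/-- the holonomy group of Tetra is cyclic of order 4: the image of `Γ_T`
under the linear-part homomorphism is exactly `{I, R, R², R³}` with `R` the quarter
turn `(x,y,z) ↦ (−y,x,z)`; moreover `R` has order 4, so this image is cyclic of
order 4. (The linear part of `γ` is the unique linear map `A` with `γ x = A x + b`.) -/
theorem holonomy_tetra :
    (∀ γ ∈ GammaT, ∃ A ∈ ({LinearMap.id, quarterTurn, quarterTurn ∘ₗ quarterTurn,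
        quarterTurn ∘ₗ quarterTurn ∘ₗ quarterTurn} : Set (R3 →ₗ[ℝ] R3)),
      ∃ b : R3, ∀ x : R3, γ x = A x + b) ∧
    (∀ γ ∈ GammaT, ∀ (A : R3 →ₗ[ℝ] R3) (b : R3), (∀ x : R3, γ x = A x + b) →
      A ∈ ({LinearMap.id, quarterTurn, quarterTurn ∘ₗ quarterTurn,
        quarterTurn ∘ₗ quarterTurn ∘ₗ quarterTurn} : Set (R3 →ₗ[ℝ] R3))) ∧
    (∀ A ∈ ({LinearMap.id, quarterTurn, quarterTurn ∘ₗ quarterTurn,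
        quarterTurn ∘ₗ quarterTurn ∘ₗ quarterTurn} : Set (R3 →ₗ[ℝ] R3)),
      ∃ γ ∈ GammaT, ∃ b : R3, ∀ x : R3, γ x = A x + b) ∧
    orderOf (quarterTurn : Module.End ℝ R3) = 4 := by
  refine ⟨fun γ hγ => ?_, fun γ hγ A b hA => ?_, fun A hA => ?_, orderOf_quarterTurn⟩
  · obtain ⟨k, hk⟩ := exists_hasLinearPart_quarterTurn_pow hγ
    exact ⟨_, mem_quarterTurn_powers_iff.2 ⟨k, rfl⟩, hk⟩
  · obtain ⟨k, hk⟩ := exists_hasLinearPart_quarterTurn_pow hγ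
    exact mem_quarterTurn_powers_iff.2 ⟨k, HasLinearPart.unique (R := ℝ) ⟨b, hA⟩ hk⟩
  · obtain ⟨k, rfl⟩ := mem_quarterTurn_powers_iff.1 hA
    exact ⟨tauE ^ k, pow_mem tauE_mem_gammaT k, hasLinearPart_tauE.pow k⟩
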